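/- Let r₀ > 0, let n ≥ 1 be an integer, and let z ∈ ℂ with |z| > r₀. Then (r₀/(2π)) · ∫_0^{2π} log|z − r₀ e^{it}| · e^{int} dt = −(r₀^{n+1}/(2n)) · z^n / |z|^{2n}. -/

import Mathlib

/-!
With `c = r₀ / z` we have `log ‖z - r₀ e^{it}‖ = log ‖z‖ + log ‖1 - c e^{it}‖`, and since `‖c‖ < 1`,
`log ‖1 - c e^{it}‖ = -∑ₖ Re (cᵏ e^{ikt}) / k`. Writing `Re w = (w + w̄) / 2` and integrating
term by term against `e^{int}`, only the `k = n` term of the conjugate part survives, giving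
`-π c̄ⁿ / n`; the constant `log ‖z‖` integrates to zero.
-/

open Real Complex ComplexConjugate

theorem integral_exp_int_mul_I (m : ℤ) :
    ∫ t in (0 : ℝ)..2 * π, exp (m * t * I) = if m = 0 then (2 * π : ℂ) else 0 := by
  split_ifs with hm
  · simp [hm]
  · have hmI : (m : ℂ) * I ≠ 0 := mul_ne_zero (by exact_mod_cast hm) I_ne_zero
    have hperiod : exp (m * I * (2 * π)) = 1 := by
      simpa [mul_comm, mul_assoc, mul_left_comm] using exp_int_mul_two_pi_mul_I m
    simp_rw [mul_right_comm _ _ I]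
    rw [integral_exp_mul_complex hmI]
    push_cast
    simp [hperiod]

theorem norm_mul_exp_ofReal_mul_I (c : ℂ) (t : ℝ) : ‖c * exp (t * I)‖ = ‖c‖ := by
  rw [norm_mul, norm_exp_ofReal_mul_I, mul_one]

theorem hasSum_re_pow_div_eq_neg_log_norm_one_sub {w : ℂ} (hw : ‖w‖ < 1) :
    HasSum (fun k : ℕ => (w ^ k).re / k) (-Real.log ‖1 - w‖) := by
  simpa [log_re] using hasSum_re (hasSum_taylorSeries_neg_log hw)

theorem integral_re_pow_mul_exp (c : ℂ) (k : ℕ) {n : ℕ} (hn : n ≠ 0) :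
    ∫ t in (0 : ℝ)..2 * π, (((c * exp (t * I)) ^ k).re : ℂ) * exp (n * t * I) =
      if k = n then π * conj c ^ n else 0 := by
  have hsplit (t : ℝ) : (((c * exp (t * I)) ^ k).re : ℂ) * exp (n * t * I) =
      c ^ k / 2 * exp (((n + k : ℤ) : ℂ) * t * I) +
        conj c ^ k / 2 * exp (((n - k : ℤ) : ℂ) * t * I) := by
    rw [re_eq_add_conj, map_pow, map_mul, ← exp_conj, mul_pow, mul_pow, ← Complex.exp_nat_mul,
      ← Complex.exp_nat_mul]
    simp only [map_mul, conj_ofReal, conj_I]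
    have hplus : exp (((n + k : ℤ) : ℂ) * t * I) = exp (k * (t * I)) * exp (n * t * I) := by
      rw [← Complex.exp_add]; push_cast; ring_nf
    have hminus : exp (((n - k : ℤ) : ℂ) * t * I) = exp (k * (t * -I)) * exp (n * t * I) := by
      rw [← Complex.exp_add]; push_cast; ring_nf
    rw [hplus, hminus]
    ring
  simp_rw [hsplit]
  rw [intervalIntegral.integral_add, intervalIntegral.integral_const_mul,
    intervalIntegral.integral_const_mul, integral_exp_int_mul_I, integral_exp_int_mul_I]
  · split_ifs <;> first | omega | (subst_vars; ring)
  all_goals exact Continuous.intervalIntegrable (by fun_prop) _ _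

theorem integral_log_norm_one_sub_mul_exp {c : ℂ} (hc : ‖c‖ < 1) {n : ℕ} (hn : n ≠ 0) :
    ∫ t in (0 : ℝ)..2 * π, (Real.log ‖1 - c * exp (t * I)‖ : ℂ) * exp (n * t * I) =
      -(π * conj c ^ n / n) := by
  set F : ℕ → ℝ → ℂ := fun k t => -((((c * exp (t * I)) ^ k).re / k : ℝ) : ℂ) * exp (n * t * I)
  have hF_hasSum (t : ℝ) :
      HasSum (F · t) ((Real.log ‖1 - c * exp (t * I)‖ : ℂ) * exp (n * t * I)) := by
    have hw : ‖c * exp (t * I)‖ < 1 := norm_mul_exp_ofReal_mul_I c t ▸ hc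
    have := ((hasSum_ofReal.mpr (hasSum_re_pow_div_eq_neg_log_norm_one_sub hw)).neg).mul_right
      (exp (n * t * I))
    rwa [ofReal_neg, neg_neg] at this
  have hF_le (k : ℕ) (t : ℝ) : ‖F k t‖ ≤ ‖c‖ ^ k :=
    calc ‖F k t‖ = |((c * exp (t * I)) ^ k).re| / k := by simp [F, norm_exp]
      _ ≤ ‖(c * exp (t * I)) ^ k‖ :=
        (div_nat_le_self_of_nonnneg (abs_nonneg _) k).trans (abs_re_le_norm _)
      _ = ‖c‖ ^ k := by rw [norm_pow, norm_mul_exp_ofReal_mul_I]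
  have hF_integral (k : ℕ) :
      ∫ t in (0 : ℝ)..2 * π, F k t = if k = n then -(π * conj c ^ n / n) else 0 := by
    simp only [F, ofReal_div, ofReal_natCast, neg_mul, div_mul_eq_mul_div,
      intervalIntegral.integral_div, intervalIntegral.integral_neg, integral_re_pow_mul_exp c k hn]
    split_ifs with hk
    · rw [hk]
    · simp
  have hsum := intervalIntegral.hasSum_integral_of_dominated_convergence
    (μ := MeasureTheory.volume) (a := 0) (b := 2 * π) (fun k _ => ‖c‖ ^ k)
    (fun k => (show Continuous (F k) by fun_prop).aestronglyMeasurable)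
    (fun k => .of_forall fun t _ => hF_le k t)
    (.of_forall fun _ _ => summable_geometric_of_lt_one (norm_nonneg c) hc)
    intervalIntegrable_const (.of_forall fun t _ => hF_hasSum t)
  simp only [hF_integral] at hsum
  exact hsum.unique (hasSum_ite_eq n _)

/-- The single layer potential of the density `e^{inθ}` on the circle of radius `r₀`,
evaluated at an exterior point `z`:
`(r₀/(2π)) ∫₀^{2π} log|z − r₀ e^{it}| e^{int} dt = −(r₀^{n+1}/(2n)) zⁿ/|z|^{2n}`. -/
theorem singleLayer_circle_exterior (r₀ : ℝ) (hr₀ : 0 < r₀) (n : ℕ) (hn : 1 ≤ n)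
    (z : ℂ) (hz : r₀ < ‖z‖) :
    ((r₀ : ℂ) / (2 * Real.pi)) *
        ∫ t in (0 : ℝ)..(2 * Real.pi),
          (Real.log ‖z - (r₀ : ℂ) * Complex.exp ((t : ℂ) * Complex.I)‖ : ℂ) *
            Complex.exp ((n : ℂ) * (t : ℂ) * Complex.I) =
      -((r₀ : ℂ) ^ (n + 1) / (2 * (n : ℂ))) * z ^ n / ((‖z‖ : ℂ)) ^ (2 * n) := by
  have hz0 : z ≠ 0 := norm_pos_iff.mp (hr₀.trans hz)
  have hn0 : n ≠ 0 := Nat.one_le_iff_ne_zero.mp hn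
  set c : ℂ := r₀ / z
  have hc : ‖c‖ < 1 := by
    rwa [norm_div, norm_real, Real.norm_of_nonneg hr₀.le, div_lt_one (hr₀.trans hz)]
  have hne (t : ℝ) : ‖1 - c * exp (t * I)‖ ≠ 0 := by
    refine norm_ne_zero_iff.mpr (sub_ne_zero.mpr (ne_of_apply_ne norm ?_))
    rw [norm_one, norm_mul_exp_ofReal_mul_I]
    exact hc.ne'
  have hsplit (t : ℝ) :
      Real.log ‖z - r₀ * exp (t * I)‖ = Real.log ‖z‖ + Real.log ‖1 - c * exp (t * I)‖ := by
    rw [← Real.log_mul (norm_ne_zero_iff.mpr hz0) (hne t), ← norm_mul]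
    simp only [c]
    field_simp
  have hmean : ∫ t in (0 : ℝ)..2 * π, exp (n * t * I) = 0 := by
    simpa [hn0] using integral_exp_int_mul_I n
  simp_rw [hsplit, ofReal_add, add_mul]
  rw [intervalIntegral.integral_add, intervalIntegral.integral_const_mul, hmean,
    integral_log_norm_one_sub_mul_exp hc hn0]
  · have hconj : conj c = r₀ / conj z := by simp [c]
    have hnorm_pow : (‖z‖ : ℂ) ^ (2 * n) = (z * conj z) ^ n := by
      rw [mul_conj, normSq_eq_norm_sq, pow_mul]
      push_cast
      rfl
    rw [hconj, hnorm_pow, mul_zero, zero_add, div_pow, mul_pow]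
    field_simp
    ring
  · exact Continuous.intervalIntegrable (by fun_prop) _ _
  · exact ((continuous_ofReal.comp (Continuous.log (by fun_prop) hne)).mul
      (by fun_prop)).intervalIntegrable _ _
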